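/- arXiv:2604.26706 — 4 statements merged into one kernel-verified Lean document; each statement's English description precedes it below -/
import Mathlib

section
/- Let μ and ν be probability measures on a finite measurable space. Then d_TV(ν, μ) ≤ sqrt(KL(ν ‖ μ)/2), where KL is the Kullback–Leibler divergence (in nats) and d_TV is total variation distance. -/
open scoped BigOperators ENNReal

/-- Total variation distance between two prob. vectors on a finite space:
`(1/2) ∑ |ν x − μ x|`, equal to `sup_A |ν(A) − μ(A)|`. -/
noncomputable def finTV {α : Type*} [Fintype α] (ν μ : α → ℝ) : ℝ :=
  (∑ x, |ν x - μ x|) / 2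

/-- Kullback–Leibler divergence in nats, with the convention that it is `+∞`
if `ν` is not absolutely continuous w.r.t. `μ`, and `0 log 0 = 0`. -/
noncomputable def finKL {α : Type*} [Fintype α] (ν μ : α → ℝ) : ℝ≥0∞ :=
  if ∀ x, μ x = 0 → ν x = 0 then
    ENNReal.ofReal (∑ x, ν x * Real.log (ν x / μ x))
  else ⊤

/-- A probability vector on a finite space. -/
def IsProbVec {α : Type*} [Fintype α] (p : α → ℝ) : Prop :=
  (∀ x, 0 ≤ p x) ∧ ∑ x, p x = 1

/-!
For `t ≥ 0` one has `3 (t - 1)² ≤ (2t + 4) · klFun t`, where `klFun t = t log t + 1 - t`: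
the difference has derivative `4 ((t + 1) log t - 2 (t - 1))`, an increasing function vanishing
at `t = 1`. Substituting `t = ν x / μ x` gives
`3 (ν x - μ x)² ≤ (2 ν x + 4 μ x) · μ x klFun (ν x / μ x)`, and Cauchy–Schwarz with the weights
`(2 ν x + 4 μ x) / 3`, of total mass `2`, yields
`(∑ |ν x - μ x|)² ≤ 2 ∑ μ x klFun (ν x / μ x) = 2 KL(ν ‖ μ)`.
-/

open Real Set InformationTheory

lemma monotoneOn_add_one_mul_log_sub_two_mul :
    MonotoneOn (fun t => (t + 1) * log t - 2 * (t - 1)) (Ioi 0) := by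
  have hderiv : ∀ t ∈ Ioi (0 : ℝ),
      HasDerivAt (fun t => (t + 1) * log t - 2 * (t - 1)) (log t + t⁻¹ - 1) t := by
    intro t (ht : 0 < t)
    refine ((((hasDerivAt_id' t).add_const 1).mul (hasDerivAt_log ht.ne')).sub
      (((hasDerivAt_id' t).sub_const 1).const_mul 2)).congr_deriv ?_
    field_simp
    ring
  refine monotoneOn_of_hasDerivWithinAt_nonneg (f' := fun t => log t + t⁻¹ - 1) (convex_Ioi 0)
    (fun t ht => (hderiv t ht).continuousAt.continuousWithinAt) (fun t ht => ?_) (fun t ht => ?_)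
  all_goals rw [interior_Ioi] at ht
  · exact (hderiv t ht).hasDerivWithinAt
  · linarith [one_sub_inv_le_log_of_pos (mem_Ioi.1 ht)]

lemma sq_sub_one_le_mul_klFun {t : ℝ} (ht : 0 ≤ t) :
    3 * (t - 1) ^ 2 ≤ (2 * t + 4) * klFun t := by
  set k : ℝ → ℝ := fun t => (t + 1) * log t - 2 * (t - 1)
  set H : ℝ → ℝ := fun t => (2 * t + 4) * klFun t - 3 * (t - 1) ^ 2
  have hk : MonotoneOn k (Ioi 0) := monotoneOn_add_one_mul_log_sub_two_mul
  have hk1 : k 1 = 0 := by simp [k]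
  have hderiv {t : ℝ} (ht : 0 < t) : HasDerivAt H (4 * k t) t := by
    refine (((((hasDerivAt_id' t).const_mul 2).add_const 4).mul (hasDerivAt_klFun ht.ne')).sub
      ((((hasDerivAt_id' t).sub_const 1).pow 2).const_mul 3)).congr_deriv ?_
    simp only [k, klFun_apply]
    ring
  have hcont : Continuous H := by fun_prop
  have hmin : IsMinOn H (Ici 0) 1 := by
    refine isMinOn_Ici_of_deriv hcont.continuousAt hcont.continuousAt
      (fun t ht => (hderiv ht.1).differentiableAt.differentiableWithinAt)
      (fun t ht => (hderiv (zero_lt_one.trans ht)).differentiableAt.differentiableWithinAt)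
      (fun t ht => ?_) (fun t ht => ?_)
    · have := hk ht.1 (mem_Ioi.2 one_pos) ht.2.le
      rw [(hderiv ht.1).deriv]
      linarith
    · have := hk (mem_Ioi.2 one_pos) (mem_Ioi.2 (zero_lt_one.trans ht)) ht.le
      rw [(hderiv (zero_lt_one.trans ht)).deriv]
      linarith
  simpa [H, klFun_one] using hmin ht

lemma sq_sub_le_mul_mul_klFun_div {a b : ℝ} (ha : 0 ≤ a) (hb : 0 ≤ b) (hab : b = 0 → a = 0) :
    3 * (a - b) ^ 2 ≤ (2 * a + 4 * b) * (b * klFun (a / b)) := by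
  rcases hb.eq_or_lt with rfl | hb
  · simp [hab rfl]
  obtain ⟨t, rfl⟩ : ∃ t, a = b * t := ⟨a / b, by field_simp⟩
  have ht : 0 ≤ t := nonneg_of_mul_nonneg_right (by linarith) hb
  calc 3 * (b * t - b) ^ 2 = b ^ 2 * (3 * (t - 1) ^ 2) := by ring
    _ ≤ b ^ 2 * ((2 * t + 4) * klFun t) :=
      mul_le_mul_of_nonneg_left (sq_sub_one_le_mul_klFun ht) (sq_nonneg b)
    _ = (2 * (b * t) + 4 * b) * (b * klFun (b * t / b)) := by
      rw [mul_div_cancel_left₀ t hb.ne']; ring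

lemma mul_klFun_div {a b : ℝ} (hab : b = 0 → a = 0) :
    b * klFun (a / b) = a * log (a / b) + b - a := by
  rcases eq_or_ne b 0 with rfl | hb
  · simp [hab rfl]
  · rw [klFun_apply]; field_simp

lemma sq_sum_abs_sub_le_two_mul_sum_mul_log_div {α : Type*} [Fintype α] {ν μ : α → ℝ}
    (hν : IsProbVec ν) (hμ : IsProbVec μ) (hac : ∀ x, μ x = 0 → ν x = 0) :
    (∑ x, |ν x - μ x|) ^ 2 ≤ 2 * ∑ x, ν x * log (ν x / μ x) := by
  have hweights : ∑ x, (2 * ν x + 4 * μ x) / 3 = 2 := by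
    rw [← Finset.sum_div, Finset.sum_add_distrib, ← Finset.mul_sum, ← Finset.mul_sum, hν.2, hμ.2]
    norm_num
  have hdiv : ∑ x, μ x * klFun (ν x / μ x) = ∑ x, ν x * log (ν x / μ x) := by
    simp only [mul_klFun_div (hac _), Finset.sum_sub_distrib, Finset.sum_add_distrib, hν.2, hμ.2]
    ring
  rw [← hweights, ← hdiv]
  refine Finset.sum_sq_le_sum_mul_sum_of_sq_le_mul _
    (fun x _ => ?_) (fun x _ => ?_) (fun x _ => ?_)
  · have := hν.1 x; have := hμ.1 x; positivity
  · exact mul_nonneg (hμ.1 x) (klFun_nonneg (div_nonneg (hν.1 x) (hμ.1 x)))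
  · have := sq_sub_le_mul_mul_klFun_div (hν.1 x) (hμ.1 x) (hac x)
    rw [sq_abs]; linarith

lemma finTV_sq_le {α : Type*} [Fintype α] {ν μ : α → ℝ}
    (hν : IsProbVec ν) (hμ : IsProbVec μ) (hac : ∀ x, μ x = 0 → ν x = 0) :
    finTV ν μ ^ 2 ≤ (∑ x, ν x * log (ν x / μ x)) / 2 := by
  have := sq_sum_abs_sub_le_two_mul_sum_mul_log_div hν hμ hac
  rw [finTV, div_pow]
  linarith

/-- Pinsker's inequality: `d_TV(ν, μ) ≤ sqrt(KL(ν‖μ)/2)`. -/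
theorem pinsker {α : Type*} [Fintype α] (ν μ : α → ℝ)
    (hν : IsProbVec ν) (hμ : IsProbVec μ) :
    ENNReal.ofReal (finTV ν μ) ≤ (finKL ν μ / 2) ^ (1/2 : ℝ) := by
  rw [finKL]
  split_ifs with hac
  · set S := ∑ x, ν x * log (ν x / μ x)
    have hTV := finTV_sq_le hν hμ hac
    have hS : 0 ≤ S / 2 := (sq_nonneg _).trans hTV
    calc ENNReal.ofReal (finTV ν μ) ≤ ENNReal.ofReal √(S / 2) :=
          ENNReal.ofReal_le_ofReal (Real.le_sqrt_of_sq_le hTV)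
      _ = (ENNReal.ofReal S / 2) ^ (1/2 : ℝ) := by
          rw [sqrt_eq_rpow, ← ENNReal.ofReal_rpow_of_nonneg hS (by norm_num),
            ENNReal.ofReal_div_of_pos two_pos, ENNReal.ofReal_ofNat]
  · rw [ENNReal.top_div_of_ne_top ENNReal.ofNat_ne_top, ENNReal.top_rpow_of_pos (by norm_num)]
    exact le_top
end

section
/- Let S and D be random variables on finite spaces. For each s let E_s be a measurable set with P(D ∈ E_s) ≤ α. Then P(D ∈ E_S) ≤ α + sqrt(I(S; D)/2), where I(S; D) is the mutual information of S and D in nats. -/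
/-!
Let `A = {(s, d) | d ∈ E s}`. Under the joint law `p` the event `A` has probability
`P(D ∈ E_S)`, while under the product `q` of the marginals it has probability
`∑ s, P(S = s) P(D ∈ E_s) ≤ α`. The mutual information is the divergence `D(p ‖ q)`, which by the
log-sum inequality (Jensen for `x ↦ x log x`) dominates the binary divergence `kl(p A ‖ q A)`.
Pinsker's inequality `2 (a - b)² ≤ kl(a ‖ b)` for two-point laws then gives
`p A - q A ≤ √(I(S; D) / 2)`. It follows by differentiating in `b`: the derivative of
`kl(a ‖ b) - 2 (a - b)²` is `(b - a) (1 - 2b)² / (b (1 - b))`, of the sign of `b - a`.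
-/

open scoped BigOperators

/-- Marginal of the first coordinate. -/
noncomputable def margFst {α β : Type*} [Fintype β] (p : α × β → ℝ) (a : α) : ℝ :=
  ∑ b, p (a, b)

/-- Marginal of the second coordinate. -/
noncomputable def margSnd {α β : Type*} [Fintype α] (p : α × β → ℝ) (b : β) : ℝ :=
  ∑ a, p (a, b)

/-- Mutual information (in nats), with the convention `0 log 0 = 0`. -/
noncomputable def mutInf {α β : Type*} [Fintype α] [Fintype β] (p : α × β → ℝ) : ℝ :=
  ∑ a, ∑ b, p (a, b) * Real.log (p (a, b) / (margFst p a * margSnd p b))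

open Finset Real

theorem mul_log_div_le_sum_mul_log_div {ι : Type*} (t : Finset ι) {p q : ι → ℝ}
    (hp : ∀ i ∈ t, 0 ≤ p i) (hq : ∀ i ∈ t, 0 ≤ q i) (hpq : ∀ i ∈ t, q i = 0 → p i = 0) :
    (∑ i ∈ t, p i) * log ((∑ i ∈ t, p i) / ∑ i ∈ t, q i) ≤
      ∑ i ∈ t, p i * log (p i / q i) := by
  set Q := ∑ i ∈ t, q i
  rcases (sum_nonneg hq).eq_or_lt with hQ | hQ
  · have hp0 : ∀ i ∈ t, p i = 0 := fun i hi =>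
      hpq i hi ((sum_eq_zero_iff_of_nonneg hq).1 hQ.symm i hi)
    rw [sum_eq_zero hp0, sum_eq_zero fun i hi => by rw [hp0 i hi, zero_mul], zero_mul]
  have hcancel : ∀ i ∈ t, q i / Q * (p i / q i) = p i / Q := fun i hi => by
    rw [div_mul_eq_mul_div, mul_div_cancel_of_imp' (hpq i hi)]
  have hterms : ∀ i ∈ t, q i / Q * (p i / q i) * log (p i / q i) = p i * log (p i / q i) / Q :=
    fun i hi => by rw [hcancel i hi, div_mul_eq_mul_div]
  have hjensen := convexOn_mul_log.map_sum_le (t := t) (w := fun i => q i / Q)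
    (p := fun i => p i / q i) (fun i hi => div_nonneg (hq i hi) hQ.le)
    (by rw [← sum_div, div_self hQ.ne']) (fun i hi => div_nonneg (hp i hi) (hq i hi))
  simp only [smul_eq_mul, ← mul_assoc] at hjensen
  rwa [sum_congr rfl hcancel, sum_congr rfl hterms, ← sum_div, ← sum_div, div_mul_eq_mul_div,
    div_le_div_iff_of_pos_right hQ] at hjensen

noncomputable def binaryKL (a b : ℝ) : ℝ :=
  a * log (a / b) + (1 - a) * log ((1 - a) / (1 - b))

theorem binaryKL_one_sub (a b : ℝ) : binaryKL (1 - a) (1 - b) = binaryKL a b := by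
  simp only [binaryKL, sub_sub_cancel]
  ring

theorem mul_log_div_eq_mul_sub (a : ℝ) {x : ℝ} (hx : x ≠ 0) :
    a * log (a / x) = a * (log a - log x) := by
  rcases eq_or_ne a 0 with rfl | ha
  · simp
  · rw [log_div ha hx]

theorem two_mul_sq_sub_le_binaryKL {a b : ℝ} (ha₀ : 0 ≤ a) (ha₁ : a ≤ 1) (hb₀ : 0 < b)
    (hb₁ : b < 1) : 2 * (a - b) ^ 2 ≤ binaryKL a b := by
  wlog hba : b ≤ a generalizing a b
  · have := this (a := 1 - a) (b := 1 - b) (by linarith) (by linarith) (by linarith)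
      (by linarith) (by linarith)
    rwa [binaryKL_one_sub, sub_sub_sub_cancel_left, ← neg_sub, neg_sq] at this
  -- `log a - log x` rather than `log (a / x)`, so that `g` is differentiable also when `a = 0`.
  set g : ℝ → ℝ := fun x => a * (log a - log x) + (1 - a) * (log (1 - a) - log (1 - x)) -
    2 * (a - x) ^ 2
  set g' : ℝ → ℝ := fun x => (x - a) * (1 - 2 * x) ^ 2 / (x * (1 - x))
  have hg : ∀ x ∈ Set.Ioo 0 1, HasDerivAt g (g' x) x := by
    intro x ⟨hx₀, hx₁⟩
    have h := (((hasDerivAt_log hx₀.ne').const_sub (log a)).const_mul a).add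
      ((((hasDerivAt_id x).const_sub 1).log (by simp; linarith)).const_sub (log (1 - a))
        |>.const_mul (1 - a)) |>.sub (((hasDerivAt_id x).const_sub a).pow 2 |>.const_mul 2)
    refine h.congr_deriv ?_
    simp only [g', id]
    field_simp [hx₀.ne', (sub_pos.2 hx₁).ne']
    ring
  have hcont : ContinuousOn g (Set.Icc b a) := by
    rcases ha₁.eq_or_lt with rfl | ha₁
    · simp only [g, sub_self, zero_mul, add_zero]
      exact ContinuousOn.sub (continuousOn_const.mul (continuousOn_const.sub
        (continuousOn_log.mono fun x hx => (hb₀.trans_le hx.1).ne'))) (by fun_prop)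
    · exact fun x hx =>
        (hg x ⟨hb₀.trans_le hx.1, hx.2.trans_lt ha₁⟩).continuousAt.continuousWithinAt
  have hanti : AntitoneOn g (Set.Icc b a) := by
    refine antitoneOn_of_hasDerivWithinAt_nonpos (convex_Icc b a) hcont (f' := g')
      (fun x hx => ?_) (fun x hx => ?_) <;> rw [interior_Icc] at hx
    · exact (hg x ⟨hb₀.trans hx.1, hx.2.trans_le ha₁⟩).hasDerivWithinAt
    · exact div_nonpos_of_nonpos_of_nonneg
        (mul_nonpos_of_nonpos_of_nonneg (by linarith [hx.2]) (sq_nonneg _))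
        (mul_nonneg (hb₀.trans hx.1).le (by linarith [hx.2]))
  have hgb := hanti ⟨le_rfl, hba⟩ ⟨hba, le_rfl⟩ hba
  norm_num [g] at hgb
  rw [binaryKL, mul_log_div_eq_mul_sub a hb₀.ne', mul_log_div_eq_mul_sub _ (sub_pos.2 hb₁).ne']
  linarith

noncomputable def discreteKL {ι : Type*} [Fintype ι] (p q : ι → ℝ) : ℝ :=
  ∑ i, p i * log (p i / q i)

section ProbVec

variable {ι : Type*} [Fintype ι] {p q : ι → ℝ}

theorem binaryKL_sum_le_discreteKL (hp : IsProbVec p) (hq : IsProbVec q)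
    (hpq : ∀ i, q i = 0 → p i = 0) (A : Finset ι) :
    binaryKL (∑ i ∈ A, p i) (∑ i ∈ A, q i) ≤ discreteKL p q := by
  classical
  have hcompl : ∀ {r : ι → ℝ}, IsProbVec r → ∑ i ∈ Aᶜ, r i = 1 - ∑ i ∈ A, r i := fun hr => by
    rw [← hr.2, ← sum_add_sum_compl A, add_sub_cancel_left]
  have hlogsum : ∀ t : Finset ι, (∑ i ∈ t, p i) * log ((∑ i ∈ t, p i) / ∑ i ∈ t, q i) ≤
      ∑ i ∈ t, p i * log (p i / q i) := fun t =>
    mul_log_div_le_sum_mul_log_div t (fun i _ => hp.1 i) (fun i _ => hq.1 i) (fun i _ => hpq i)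
  rw [discreteKL, ← sum_add_sum_compl A, binaryKL, ← hcompl hp, ← hcompl hq]
  exact add_le_add (hlogsum A) (hlogsum Aᶜ)

theorem sum_sub_sum_le_sqrt_discreteKL (hp : IsProbVec p) (hq : IsProbVec q)
    (hpq : ∀ i, q i = 0 → p i = 0) (A : Finset ι) :
    ∑ i ∈ A, p i - ∑ i ∈ A, q i ≤ √(discreteKL p q / 2) := by
  set a := ∑ i ∈ A, p i
  set b := ∑ i ∈ A, q i
  rcases le_or_gt a b with hab | hba
  · exact (sub_nonpos.2 hab).trans (sqrt_nonneg _)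
  have hb₀ : 0 < b := by
    refine (sum_nonneg fun i _ => hq.1 i).lt_of_ne fun hb => hba.not_ge ?_
    have hq0 := (sum_eq_zero_iff_of_nonneg fun i _ => hq.1 i).1 hb.symm
    exact (sum_eq_zero fun i hi => hpq i (hq0 i hi)).le.trans hb.le
  have ha₁ : a ≤ 1 := hp.2 ▸ sum_le_univ_sum_of_nonneg hp.1
  have hpinsker := (two_mul_sq_sub_le_binaryKL (hb₀.le.trans hba.le) ha₁ hb₀
    (hba.trans_le ha₁)).trans (binaryKL_sum_le_discreteKL hp hq hpq A)
  rw [← sqrt_sq (sub_nonneg.2 hba.le)]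
  exact sqrt_le_sqrt (by linarith)

end ProbVec

section Marginals

variable {α β : Type*} {p : α × β → ℝ}

theorem sum_margFst [Fintype α] [Fintype β] (p : α × β → ℝ) : ∑ a, margFst p a = ∑ x, p x :=
  (Fintype.sum_prod_type p).symm

theorem sum_margSnd [Fintype α] [Fintype β] (p : α × β → ℝ) : ∑ b, margSnd p b = ∑ x, p x :=
  (Fintype.sum_prod_type_right p).symm

theorem le_margFst [Fintype β] (hp : ∀ x, 0 ≤ p x) (a : α) (b : β) : p (a, b) ≤ margFst p a :=
  single_le_sum (fun b _ => hp (a, b)) (mem_univ b)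

theorem le_margSnd [Fintype α] (hp : ∀ x, 0 ≤ p x) (a : α) (b : β) : p (a, b) ≤ margSnd p b :=
  single_le_sum (fun a _ => hp (a, b)) (mem_univ a)

theorem IsProbVec.margFst_mul_margSnd [Fintype α] [Fintype β] (hp : IsProbVec p) :
    IsProbVec fun x : α × β => margFst p x.1 * margSnd p x.2 := by
  refine ⟨fun x => mul_nonneg ?_ ?_, ?_⟩
  · exact (hp.1 _).trans (le_margFst hp.1 x.1 x.2)
  · exact (hp.1 _).trans (le_margSnd hp.1 x.1 x.2)
  · rw [Fintype.sum_prod_type, ← sum_mul_sum, sum_margFst, sum_margSnd, hp.2, one_mul]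

theorem eq_zero_of_margFst_mul_margSnd_eq_zero [Fintype α] [Fintype β] (hp : ∀ x, 0 ≤ p x)
    {x : α × β} (hx : margFst p x.1 * margSnd p x.2 = 0) : p x = 0 := by
  refine le_antisymm ?_ (hp x)
  rcases mul_eq_zero.1 hx with h | h
  · exact h ▸ le_margFst hp x.1 x.2
  · exact h ▸ le_margSnd hp x.1 x.2

theorem mutInf_eq_discreteKL [Fintype α] [Fintype β] (p : α × β → ℝ) :
    mutInf p = discreteKL p fun x => margFst p x.1 * margSnd p x.2 := by
  rw [mutInf, discreteKL, Fintype.sum_prod_type]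

end Marginals

/-- Selected-target coverage bound via mutual information:
if `P(D ∈ E_s) ≤ α` for each fixed `s`, then
`P(D ∈ E_S) ≤ α + sqrt(I(S;D)/2)`. -/
theorem selected_coverage_mutInf {𝒮 𝒟 : Type*} [Fintype 𝒮] [Fintype 𝒟]
    (p : 𝒮 × 𝒟 → ℝ) (hp : IsProbVec p) (E : 𝒮 → Finset 𝒟) (α : ℝ)
    (hcov : ∀ s, ∑ d ∈ E s, margSnd p d ≤ α) :
    ∑ s, ∑ d ∈ E s, p (s, d) ≤ α + Real.sqrt (mutInf p / 2) := by
  classical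
  set q : 𝒮 × 𝒟 → ℝ := fun x => margFst p x.1 * margSnd p x.2
  set A := univ.filter fun x : 𝒮 × 𝒟 => x.2 ∈ E x.1
  have hA : ∀ f : 𝒮 × 𝒟 → ℝ, ∑ x ∈ A, f x = ∑ s, ∑ d ∈ E s, f (s, d) := fun f => by
    rw [sum_filter, Fintype.sum_prod_type]
    simp only [sum_ite_mem, univ_inter]
  have hqA : ∑ x ∈ A, q x ≤ α :=
    calc ∑ x ∈ A, q x = ∑ s, margFst p s * ∑ d ∈ E s, margSnd p d := by
          rw [hA]; simp only [q, mul_sum]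
      _ ≤ ∑ s, margFst p s * α :=
          sum_le_sum fun s _ => mul_le_mul_of_nonneg_left (hcov s) (sum_nonneg fun d _ => hp.1 _)
      _ = α := by rw [← sum_mul, sum_margFst, hp.2, one_mul]
  have hpinsker := sum_sub_sum_le_sqrt_discreteKL hp hp.margFst_mul_margSnd
    (fun x => eq_zero_of_margFst_mul_margSnd_eq_zero hp.1) A
  rw [← mutInf_eq_discreteKL, hA] at hpinsker
  linarith
end

section
/- Fix 0 < α ≤ 1/2 and 0 ≤ δ ≤ α, and let μ₀, μ₁, μ be as in the three-point construction (μ₀(a₀)=α+δ, μ₀(a₁)=α−δ, μ₀(b)=1−2α; μ₁ the same with a₀, a₁ swapped; μ = (μ₀+μ₁)/2). Define events E₀ = {a₀} and E₁ = {a₁}. Then μ(E₀) = μ(E₁) = α, but (1/2)μ₀(E₀) + (1/2)μ₁(E₁) = α + δ = α + (1/2)d_TV(μ₀, μ) + (1/2)d_TV(μ₁, μ). -/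
open scoped BigOperators

/-- Sharpness of the leakage bound. On the three-point space `{a₀,a₁,b} = Fin 3`
with `μ₀, μ₁` as in the construction, `μ = (μ₀+μ₁)/2`, and noncoverage events
`E₀ = {a₀}`, `E₁ = {a₁}`: both fixed-target noncoverage probabilities are `α`,
while the selected-target noncoverage is `α + δ = α + ½d_TV(μ₀,μ) + ½d_TV(μ₁,μ)`. -/
theorem three_point_sharpness (α δ : ℝ) (hα₀ : 0 < α) (hα₁ : α ≤ 1/2)
    (hδ₀ : 0 ≤ δ) (hδ₁ : δ ≤ α)
    (μ₀ μ₁ μ : Fin 3 → ℝ)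
    (h00 : μ₀ 0 = α + δ) (h01 : μ₀ 1 = α - δ) (h0b : μ₀ 2 = 1 - 2*α)
    (h10 : μ₁ 0 = α - δ) (h11 : μ₁ 1 = α + δ) (h1b : μ₁ 2 = 1 - 2*α)
    (hμ : ∀ x, μ x = (μ₀ x + μ₁ x) / 2) :
    μ 0 = α ∧ μ 1 = α ∧
    (1/2) * μ₀ 0 + (1/2) * μ₁ 1 = α + δ ∧
    α + δ = α + (1/2) * finTV μ₀ μ + (1/2) * finTV μ₁ μ := by
  have e0 := hμ 0; have e1 := hμ 1; have e2 := hμ 2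
  rw [h00, h10] at e0; rw [h01, h11] at e1; rw [h0b, h1b] at e2
  have t0 : finTV μ₀ μ = δ := by
    simp only [finTV, Fin.sum_univ_three, e0, e1, e2, h00, h01, h0b]
    rw [abs_of_nonneg (by linarith), abs_of_nonpos (by linarith), abs_of_nonneg (by linarith)]
    ring
  have t1 : finTV μ₁ μ = δ := by
    simp only [finTV, Fin.sum_univ_three, e0, e1, e2, h10, h11, h1b]
    rw [abs_of_nonpos (by linarith), abs_of_nonneg (by linarith), abs_of_nonneg (by linarith)]
    ring
  refine ⟨by rw [e0]; ring, by rw [e1]; ring, by rw [h00, h11]; ring, by rw [t0, t1]; ring⟩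
end

section
/- Let D be a random variable on a finite space, W = φ(D) a function of D taking values in a finite set 𝒲, U a random variable independent of D, and S = A(W, U) for an arbitrary function A. If for each s the measurable set E_s satisfies P(D ∈ E_s) ≤ α, then P(D ∈ E_S) ≤ α + sqrt(H(W)/2) ≤ α + sqrt(log|𝒲|/2). -/
open scoped BigOperators

/-- Shannon entropy in nats (`0 log 0 = 0` holds since `Real.log 0 = 0`). -/
noncomputable def entropy {α : Type*} [Fintype α] (p : α → ℝ) : ℝ :=
  -∑ x, p x * Real.log (p x)

/-! Fix the value `u` of the independent seed and put `B w = E (A w u)`. Weighting each `d` by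
`q (φ d)`, where `q` is the law of `W = φ(D)`, compares the event `D ∈ B (φ D)` with `D ∈ B W'` for
an independent copy `W'` of `W`, whose probability is at most `α`; the weight lost is
`∑ q (1 - q) = 1 - ∑ q²`. Cauchy–Schwarz and `-log x ≥ 2 (1 - x)²` bound this by `√(H(W)/2)`, and
Jensen's inequality for the concave `x ↦ -x log x` gives `H(W) ≤ log |𝒲|`. -/

open Finset Real

noncomputable def pushforward {α β : Type*} [Fintype α] [DecidableEq β] (φ : α → β)
    (p : α → ℝ) : β → ℝ :=
  fun b => ∑ a, if φ a = b then p a else 0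

section
variable {α β : Type*} [Fintype α] [Fintype β]

theorem sum_mul_comp_eq_sum_pushforward_mul [DecidableEq β] (p : α → ℝ) (φ : α → β)
    (g : β → ℝ) : ∑ a, p a * g (φ a) = ∑ b, pushforward φ p b * g b := by
  simp only [pushforward, sum_mul, ite_mul, zero_mul]
  rw [sum_comm]
  simp

theorem entropy_eq_sum_negMulLog (p : α → ℝ) : entropy p = ∑ a, negMulLog (p a) := by
  simp [entropy, negMulLog_eq_neg]

theorem two_mul_one_sub_sq_le_neg_log {x : ℝ} (h0 : 0 < x) (h1 : x ≤ 1) :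
    2 * (1 - x) ^ 2 ≤ -log x := by
  set y := √√x
  have hy0 : 0 < y := by positivity
  have hy1 : y ≤ 1 := sqrt_le_one.mpr (sqrt_le_one.mpr h1)
  have hxy : x = y ^ 4 := by
    rw [show y ^ 4 = (y ^ 2) ^ 2 by ring, sq_sqrt (sqrt_nonneg x), sq_sqrt h0.le]
  have hlog : log x ≤ 4 * (y - 1) := by
    rw [hxy, log_pow]
    push_cast
    linarith [log_le_sub_one_of_pos hy0]
  have hpoly : 2 * (1 - y ^ 4) ^ 2 ≤ 4 * (1 - y) := by
    nlinarith [sq_nonneg (y ^ 3 * (1 - y)), mul_nonneg hy0.le (sq_nonneg (1 - y)),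
      mul_nonneg (mul_nonneg hy0.le hy0.le) (sq_nonneg (1 - y)), sq_nonneg (1 - 2 * y ^ 2),
      mul_nonneg hy0.le (sq_nonneg (1 + y - 2 * y ^ 2)), sq_nonneg (y ^ 2 - y ^ 3),
      mul_nonneg (sub_nonneg.2 hy1) hy0.le]
  rw [← hxy] at hpoly
  linarith

theorem two_mul_mul_one_sub_sq_le_negMulLog {x : ℝ} (h0 : 0 ≤ x) (h1 : x ≤ 1) :
    2 * x * (1 - x) ^ 2 ≤ negMulLog x := by
  rcases h0.eq_or_lt with rfl | hpos
  · simp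
  · have := mul_le_mul_of_nonneg_left (two_mul_one_sub_sq_le_neg_log hpos h1) h0
    rw [negMulLog]
    linarith

variable {p : α → ℝ}

theorem isProbVec_pushforward [DecidableEq β] (hp : IsProbVec p) (φ : α → β) :
    IsProbVec (pushforward φ p) := by
  refine ⟨fun b => sum_nonneg fun a _ => ?_, ?_⟩
  · split_ifs
    exacts [hp.1 a, le_rfl]
  · simpa [hp.2] using (sum_mul_comp_eq_sum_pushforward_mul p φ fun _ => 1).symm

namespace IsProbVec

theorem le_one (hp : IsProbVec p) (a : α) : p a ≤ 1 :=
  hp.2 ▸ single_le_sum (fun a _ => hp.1 a) (mem_univ a)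

theorem sum_mul_le (hp : IsProbVec p) {f : α → ℝ} {c : ℝ} (hf : ∀ a, f a ≤ c) :
    ∑ a, p a * f a ≤ c :=
  calc ∑ a, p a * f a ≤ ∑ a, p a * c := by gcongr with a; exacts [hp.1 a, hf a]
    _ = c := by rw [← sum_mul, hp.2, one_mul]

theorem entropy_le_log_card (hp : IsProbVec p) : entropy p ≤ log (Fintype.card α) := by
  have hα : Nonempty α := by
    by_contra h
    simpa [not_nonempty_iff.mp h] using hp.2
  set n : ℝ := (Fintype.card α : ℝ)
  have hn : 0 < n := by positivity
  have hjensen := concaveOn_negMulLog.le_map_sum (t := univ) (w := fun _ => n⁻¹) (p := p)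
    (fun _ _ => by positivity) (by simp [n]) fun a _ => Set.mem_Ici.mpr (hp.1 a)
  have hmean : ∑ a, n⁻¹ • p a = n⁻¹ := by rw [← smul_sum, hp.2, smul_eq_mul, mul_one]
  have hlog : negMulLog n⁻¹ = n⁻¹ * log n := by simp [negMulLog, log_inv]
  rw [hmean, hlog, ← smul_sum, smul_eq_mul] at hjensen
  rw [entropy_eq_sum_negMulLog]
  exact le_of_mul_le_mul_left hjensen (inv_pos.mpr hn)

theorem sum_mul_one_sub_le_sqrt_entropy (hp : IsProbVec p) :
    ∑ a, p a * (1 - p a) ≤ √(entropy p / 2) := by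
  apply le_sqrt_of_sq_le
  calc (∑ a, p a * (1 - p a)) ^ 2 ≤ (∑ a, p a) * ∑ a, p a * (1 - p a) ^ 2 :=
        sum_sq_le_sum_mul_sum_of_sq_le_mul _ (fun a _ => hp.1 a)
          (fun a _ => mul_nonneg (hp.1 a) (sq_nonneg _)) fun a _ => le_of_eq (by ring)
    _ ≤ entropy p / 2 := by
        rw [hp.2, one_mul, entropy_eq_sum_negMulLog, le_div_iff₀ two_pos, sum_mul]
        gcongr with a
        linarith [two_mul_mul_one_sub_sq_le_negMulLog (hp.1 a) (hp.le_one a)]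

theorem sum_mem_comp_le_add [DecidableEq α] [DecidableEq β] (hp : IsProbVec p) (φ : α → β)
    (B : β → Finset α) {c : ℝ} (hB : ∀ b, ∑ a ∈ B b, p a ≤ c) :
    ∑ a with a ∈ B (φ a), p a ≤ c + ∑ b, pushforward φ p b * (1 - pushforward φ p b) := by
  set q := pushforward φ p
  have hq := isProbVec_pushforward hp φ
  have hmatched : ∑ a with a ∈ B (φ a), p a * q (φ a) ≤ c :=
    calc ∑ a with a ∈ B (φ a), p a * q (φ a)
        ≤ ∑ a with a ∈ B (φ a), ∑ b with a ∈ B b, p a * q b :=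
          sum_le_sum fun a ha => single_le_sum (f := fun b => p a * q b)
            (fun b _ => mul_nonneg (hp.1 a) (hq.1 b)) (by simpa using ha)
      _ ≤ ∑ a, ∑ b with a ∈ B b, p a * q b :=
          sum_le_sum_of_subset_of_nonneg (subset_univ _) fun a _ _ =>
            sum_nonneg fun b _ => mul_nonneg (hp.1 a) (hq.1 b)
      _ = ∑ b, q b * ∑ a ∈ B b, p a := by
          rw [sum_comm' (t' := univ) (s' := B) (by simp)]
          simp [mul_sum, mul_comm]
      _ ≤ c := hq.sum_mul_le hB
  have hmismatched : ∑ a with a ∈ B (φ a), p a * (1 - q (φ a)) ≤ ∑ b, q b * (1 - q b) := by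
    rw [← sum_mul_comp_eq_sum_pushforward_mul]
    exact sum_le_sum_of_subset_of_nonneg (subset_univ _) fun a _ _ =>
      mul_nonneg (hp.1 a) (sub_nonneg.2 (hq.le_one _))
  calc ∑ a with a ∈ B (φ a), p a
      = ∑ a with a ∈ B (φ a), p a * q (φ a) + ∑ a with a ∈ B (φ a), p a * (1 - q (φ a)) := by
        rw [← sum_add_distrib]
        exact sum_congr rfl fun a _ => by ring
    _ ≤ c + ∑ b, q b * (1 - q b) := add_le_add hmatched hmismatched

end IsProbVec
end

/-- Finite-message screening bound. `D` has law `pD` on a finite space,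
`W = φ(D)` takes values in a finite set `𝒲`, `U` has law `pU` and is independent
of `D` (so the joint law of `(D,U)` is the product `pD ⊗ pU`), and
`S = A(W,U)`. If `P(D ∈ E_s) ≤ α` for every fixed `s`, then
`P(D ∈ E_S) ≤ α + sqrt(H(W)/2) ≤ α + sqrt(log|𝒲|/2)`. -/
theorem finite_message_screening {𝒟 𝒲 𝒰 𝒮 : Type*}
    [Fintype 𝒟] [DecidableEq 𝒟] [Fintype 𝒲] [Fintype 𝒰] [DecidableEq 𝒲]
    (pD : 𝒟 → ℝ) (hD : IsProbVec pD) (pU : 𝒰 → ℝ) (hU : IsProbVec pU)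
    (φ : 𝒟 → 𝒲) (A : 𝒲 → 𝒰 → 𝒮) (E : 𝒮 → Finset 𝒟) (α : ℝ)
    (hcov : ∀ s : 𝒮, ∑ d ∈ E s, pD d ≤ α) :
    (∑ d, ∑ u, pD d * pU u * (if d ∈ E (A (φ d) u) then (1:ℝ) else 0)) ≤
        α + Real.sqrt (entropy (fun w => ∑ d, if φ d = w then pD d else 0) / 2) ∧
      α + Real.sqrt (entropy (fun w => ∑ d, if φ d = w then pD d else 0) / 2) ≤
        α + Real.sqrt (Real.log (Fintype.card 𝒲) / 2) := by
  change _ ≤ α + √(entropy (pushforward φ pD) / 2) ∧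
    α + √(entropy (pushforward φ pD) / 2) ≤ _
  set q := pushforward φ pD
  have hq : IsProbVec q := isProbVec_pushforward hD φ
  have hscreen (u : 𝒰) : ∑ d with d ∈ E (A (φ d) u), pD d ≤ α + ∑ w, q w * (1 - q w) :=
    hD.sum_mem_comp_le_add φ (fun w => E (A w u)) fun w => hcov (A w u)
  refine ⟨?_, by gcongr; exact hq.entropy_le_log_card⟩
  calc (∑ d, ∑ u, pD d * pU u * (if d ∈ E (A (φ d) u) then (1:ℝ) else 0))
      = ∑ u, pU u * ∑ d with d ∈ E (A (φ d) u), pD d := by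
        rw [sum_comm]
        simp [sum_filter, mul_sum, mul_comm]
    _ ≤ α + ∑ w, q w * (1 - q w) := hU.sum_mul_le hscreen
    _ ≤ α + √(entropy q / 2) := by
        gcongr
        exact hq.sum_mul_one_sub_le_sqrt_entropy
end
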